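/- Let φ = (1+√5)/2 and write B = −φ+1, C = 0, D = 1. A sequence X₁X₂X₃… ∈ {B, C, D}^ℕ satisfies d_L(x) = X₁X₂X₃… for some x ∈ (−1/φ², 1/φ] if and only if there is no index i with X_i = C and X_{i+1} = B, there is no index i with X_j = B for all j ≥ i, and there is no index i with X_j = C for all j ≥ i (i.e., the sequence contains no factor CB and no suffix B^ω or C^ω). -/

import Mathlib

/-!
On `(φ - 2, φ - 1] = (-1/φ², 1/φ]` the digit `D_L` takes the values `-φ + 1`, `0`, `1` exactly on
`(φ - 2, 0]`, `(0, 2φ - 3]`, `(2φ - 3, φ - 1]`, and `T_L` maps this interval into itself. A digit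
`0` means `x > 0`, so `T_L x = φ² x > 0` and the next digit is not `-φ + 1`. On a tail of constant
digit, `T_L` is the dilation by `φ² > 1` about its fixed point (`φ - 2`, resp. `0`), so the orbit
cannot stay in the bounded digit interval.

Conversely, with `φ⁻² = 2 - φ`, the tails `s_k = ∑_{j ≥ 0} X_{k+j} φ^{-2(j+1)}` satisfy
`s_k = φ⁻² (X_k + s_{k+1})`, i.e. `T_L s_k = s_{k+1}` once `D_L s_k = X_k`, and lie in
`[φ - 2, φ - 1]`. `s_k = φ - 2` forces `X_k = -φ + 1` and `s_{k+1} = φ - 2`, hence a tail `B^ω`;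
`s_k ≤ 0` with `X_k = 0` forces `X_{k+1} = 0` (no `CB`, and a digit `1` would make `s_{k+1} > 0`)
and `s_{k+1} ≤ 0`, hence a tail `C^ω`. Excluding these, each `s_k` lies in the digit interval of
`X_k`.
-/

open Set Function

section TailSum

variable {r a b : ℝ} {X : ℕ → ℝ}

noncomputable def tailSum (r : ℝ) (X : ℕ → ℝ) (k : ℕ) : ℝ :=
  ∑' j : ℕ, X (k + j) * r ^ (j + 1)

lemma hasSum_mul_pow_succ (hr0 : 0 ≤ r) (hr1 : r < 1) (a : ℝ) :
    HasSum (fun j : ℕ => a * r ^ (j + 1)) (a * (r / (1 - r))) := by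
  simpa only [pow_succ', mul_assoc, div_eq_mul_inv] using
    (hasSum_geometric_of_lt_one hr0 hr1).mul_left (a * r)

lemma summable_tailSum (hr0 : 0 ≤ r) (hr1 : r < 1) (hX : ∀ i, X i ∈ Icc a b) (k : ℕ) :
    Summable fun j : ℕ => X (k + j) * r ^ (j + 1) := by
  refine (hasSum_mul_pow_succ hr0 hr1 (|a| + |b|)).summable.of_norm_bounded fun j => ?_
  rw [norm_mul, norm_pow, Real.norm_of_nonneg hr0, Real.norm_eq_abs]
  gcongr
  obtain ⟨hlo, hhi⟩ := hX (k + j)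
  exact abs_le.2 ⟨by linarith [neg_abs_le a, abs_nonneg b], by linarith [le_abs_self b, abs_nonneg a]⟩

lemma tailSum_eq (hr0 : 0 ≤ r) (hr1 : r < 1) (hX : ∀ i, X i ∈ Icc a b) (k : ℕ) :
    tailSum r X k = r * (X k + tailSum r X (k + 1)) := by
  rw [tailSum, (summable_tailSum hr0 hr1 hX k).tsum_eq_zero_add, tailSum, mul_add,
    ← tsum_mul_left]
  congr 1
  · simp only [add_zero, zero_add, pow_one, mul_comm]
  · exact tsum_congr fun j => by rw [add_right_comm k, ← add_assoc]; ring

lemma tailSum_mem_Icc (hr0 : 0 ≤ r) (hr1 : r < 1) (hX : ∀ i, X i ∈ Icc a b) (k : ℕ) :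
    tailSum r X k ∈ Icc (a * (r / (1 - r))) (b * (r / (1 - r))) :=
  ⟨hasSum_le (fun j => by gcongr; exact (hX (k + j)).1) (hasSum_mul_pow_succ hr0 hr1 a)
      (summable_tailSum hr0 hr1 hX k).hasSum,
    hasSum_le (fun j => by gcongr; exact (hX (k + j)).2) (summable_tailSum hr0 hr1 hX k).hasSum
      (hasSum_mul_pow_succ hr0 hr1 b)⟩

end TailSum

namespace Real

open goldenRatio

lemma one_div_goldenRatio : 1 / φ = φ - 1 := by
  rw [div_eq_iff goldenRatio_ne_zero]
  linear_combination -goldenRatio_sq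

lemma neg_one_div_goldenRatio_sq : -(1 / φ ^ 2) = φ - 2 := by
  rw [neg_eq_iff_eq_neg, div_eq_iff (by positivity)]
  linear_combination (φ - 1) * goldenRatio_sq

lemma one_div_goldenRatio_pow_three : 1 / φ ^ 3 = 2 * φ - 3 := by
  rw [div_eq_iff (by positivity)]
  linear_combination -(2 * φ ^ 2 - φ + 1) * goldenRatio_sq

lemma two_mul_goldenRatio_sub_three_pos : 0 < 2 * φ - 3 := by
  rw [← one_div_goldenRatio_pow_three]; positivity

lemma two_sub_goldenRatio_pos : 0 < 2 - φ := sub_pos.2 goldenRatio_lt_two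

lemma two_sub_goldenRatio_lt_one : 2 - φ < 1 := by linarith [one_lt_goldenRatio]

lemma one_lt_goldenRatio_sq : 1 < φ ^ 2 :=
  one_lt_pow₀ one_lt_goldenRatio two_ne_zero

end Real

namespace GoldenLeft

open Real goldenRatio

noncomputable def digit (x : ℝ) : ℝ :=
  if x ≤ -(1 / φ ^ 2) then -φ else if x ≤ 0 then -φ + 1 else if x ≤ 1 / φ ^ 3 then 0 else 1

noncomputable def transform (x : ℝ) : ℝ := φ ^ 2 * x - digit x

lemma digit_eq_neg_add_one_iff {x : ℝ} : digit x = -φ + 1 ↔ x ∈ Ioc (φ - 2) 0 := by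
  have := goldenRatio_lt_two
  have := two_mul_goldenRatio_sub_three_pos
  rw [digit, neg_one_div_goldenRatio_sq, one_div_goldenRatio_pow_three, mem_Ioc]
  split_ifs <;> grind

lemma digit_eq_zero_iff {x : ℝ} : digit x = 0 ↔ x ∈ Ioc 0 (2 * φ - 3) := by
  have := goldenRatio_lt_two
  have := two_mul_goldenRatio_sub_three_pos
  rw [digit, neg_one_div_goldenRatio_sq, one_div_goldenRatio_pow_three, mem_Ioc]
  split_ifs <;> grind

lemma digit_eq_one_iff {x : ℝ} : digit x = 1 ↔ 2 * φ - 3 < x := by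
  have := goldenRatio_lt_two
  have := two_mul_goldenRatio_sub_three_pos
  rw [digit, neg_one_div_goldenRatio_sq, one_div_goldenRatio_pow_three]
  split_ifs <;> grind

lemma transform_mem_Ioc {x : ℝ} (hx : x ∈ Ioc (φ - 2) (φ - 1)) :
    transform x ∈ Ioc (φ - 2) (φ - 1) := by
  have := one_lt_goldenRatio
  have := goldenRatio_sq
  obtain ⟨hlo, hhi⟩ := hx
  rw [transform, goldenRatio_sq]
  rcases le_or_gt x 0 with hB | hpos
  · rw [digit_eq_neg_add_one_iff.2 ⟨hlo, hB⟩]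
    constructor <;> nlinarith
  rcases le_or_gt x (2 * φ - 3) with hC | hD
  · rw [digit_eq_zero_iff.2 ⟨hpos, hC⟩]
    constructor <;> nlinarith
  · rw [digit_eq_one_iff.2 hD]
    constructor <;> nlinarith

lemma iterate_transform_mem_Ioc {x : ℝ} (hx : x ∈ Ioc (φ - 2) (φ - 1)) (n : ℕ) :
    transform^[n] x ∈ Ioc (φ - 2) (φ - 1) := by
  induction n with
  | zero => exact hx
  | succ n ih => rw [iterate_succ_apply']; exact transform_mem_Ioc ih

lemma digit_transform_ne_of_digit_eq_zero {x : ℝ} (hx : digit x = 0) :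
    digit (transform x) ≠ -φ + 1 := by
  intro h
  have hpos := (digit_eq_zero_iff.1 hx).1
  have hle := (digit_eq_neg_add_one_iff.1 h).2
  rw [transform, hx] at hle
  nlinarith [one_lt_goldenRatio_sq]

lemma not_eventually_digit_eq {x c d M : ℝ} (hfix : φ ^ 2 * c - d = c)
    (hle : ∀ y, digit y = d → y ≤ M) {i : ℕ} (hx : c < transform^[i] x) :
    ¬ ∀ j, i ≤ j → digit (transform^[j] x) = d := by
  intro h
  have closed : ∀ k, transform^[i + k] x - c = (φ ^ 2) ^ k * (transform^[i] x - c) := by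
    intro k
    induction k with
    | zero => simp
    | succ k ih =>
      rw [← add_assoc, iterate_succ_apply', transform, h _ (by omega), pow_succ]
      linear_combination φ ^ 2 * ih + hfix
  obtain ⟨k, hk⟩ := pow_unbounded_of_one_lt ((M - c) / (transform^[i] x - c)) one_lt_goldenRatio_sq
  rw [div_lt_iff₀ (sub_pos.2 hx)] at hk
  linarith [closed k, hle _ (h (i + k) (by omega))]

lemma not_eventually_digit_eq_neg_add_one {x : ℝ} (hx : x ∈ Ioc (φ - 2) (φ - 1)) :
    ¬ ∃ i, ∀ j, i ≤ j → digit (transform^[j] x) = -φ + 1 := fun ⟨i, h⟩ =>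
  not_eventually_digit_eq (by linear_combination (φ - 1) * goldenRatio_sq)
    (fun _ hy => (digit_eq_neg_add_one_iff.1 hy).2) (iterate_transform_mem_Ioc hx i).1 h

lemma not_eventually_digit_eq_zero (x : ℝ) :
    ¬ ∃ i, ∀ j, i ≤ j → digit (transform^[j] x) = 0 := fun ⟨i, h⟩ =>
  not_eventually_digit_eq (by ring) (fun _ hy => (digit_eq_zero_iff.1 hy).2)
    (digit_eq_zero_iff.1 (h i le_rfl)).1 h

section Expansion

variable {X : ℕ → ℝ} (hX : ∀ i, X i = -φ + 1 ∨ X i = 0 ∨ X i = 1)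
include hX

lemma mem_Icc_of_digits (i : ℕ) : X i ∈ Icc (-φ + 1) 1 := by
  have := one_lt_goldenRatio
  rcases hX i with h | h | h <;> rw [h] <;> constructor <;> linarith

lemma tailSum_golden_eq (k : ℕ) :
    tailSum (2 - φ) X k = (2 - φ) * (X k + tailSum (2 - φ) X (k + 1)) :=
  tailSum_eq two_sub_goldenRatio_pos.le two_sub_goldenRatio_lt_one (mem_Icc_of_digits hX) k

lemma tailSum_golden_mem_Icc (k : ℕ) : tailSum (2 - φ) X k ∈ Icc (φ - 2) (φ - 1) := by
  have h := tailSum_mem_Icc two_sub_goldenRatio_pos.le two_sub_goldenRatio_lt_one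
    (mem_Icc_of_digits hX) k
  have hgeo : (2 - φ) / (1 - (2 - φ)) = φ - 1 := by
    rw [div_eq_iff (by linarith [one_lt_goldenRatio])]
    linear_combination -goldenRatio_sq
  rwa [hgeo, one_mul, show (-φ + 1) * (φ - 1) = φ - 2 by linear_combination -goldenRatio_sq] at h

lemma sub_two_lt_tailSum_golden (hB : ¬ ∃ i, ∀ j, i ≤ j → X j = -φ + 1) (k : ℕ) :
    φ - 2 < tailSum (2 - φ) X k := by
  by_contra! h
  have step : ∀ j, tailSum (2 - φ) X j ≤ φ - 2 →
      X j = -φ + 1 ∧ tailSum (2 - φ) X (j + 1) ≤ φ - 2 := by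
    intro j hj
    have hnext := (tailSum_golden_mem_Icc hX (j + 1)).1
    rw [tailSum_golden_eq hX] at hj
    have hsum : X j + tailSum (2 - φ) X (j + 1) ≤ -1 :=
      le_of_mul_le_mul_left (hj.trans_eq (by ring)) two_sub_goldenRatio_pos
    have := one_lt_goldenRatio
    rcases hX j with hj' | hj' | hj' <;> rw [hj'] at hsum
    · exact ⟨hj', by linarith⟩
    all_goals linarith
  refine hB ⟨k, fun j hj => (step j ?_).1⟩
  induction j, hj using Nat.le_induction with
  | base => exact h
  | succ j _ ih => exact (step j ih).2

lemma tailSum_golden_pos (hCB : ¬ ∃ i, X i = 0 ∧ X (i + 1) = -φ + 1)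
    (hC : ¬ ∃ i, ∀ j, i ≤ j → X j = 0) {k : ℕ} (hk : X k = 0) : 0 < tailSum (2 - φ) X k := by
  by_contra! h
  have hr := two_sub_goldenRatio_pos
  have step : ∀ j, X j = 0 ∧ tailSum (2 - φ) X j ≤ 0 →
      X (j + 1) = 0 ∧ tailSum (2 - φ) X (j + 1) ≤ 0 := by
    rintro j ⟨hj0, hj⟩
    rw [tailSum_golden_eq hX, hj0, zero_add] at hj
    have hnext : tailSum (2 - φ) X (j + 1) ≤ 0 := by nlinarith
    rcases hX (j + 1) with hB | h0 | hD
    · exact absurd ⟨j, hj0, hB⟩ hCB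
    · exact ⟨h0, hnext⟩
    · rw [tailSum_golden_eq hX, hD] at hnext
      nlinarith [(tailSum_golden_mem_Icc hX (j + 1 + 1)).1, one_lt_goldenRatio]
  refine hC ⟨k, fun j hj => (?_ : X j = 0 ∧ tailSum (2 - φ) X j ≤ 0).1⟩
  induction j, hj using Nat.le_induction with
  | base => exact ⟨hk, h⟩
  | succ j _ ih => exact step j ih

variable (hCB : ¬ ∃ i, X i = 0 ∧ X (i + 1) = -φ + 1) (hB : ¬ ∃ i, ∀ j, i ≤ j → X j = -φ + 1)
  (hC : ¬ ∃ i, ∀ j, i ≤ j → X j = 0)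
include hCB hB hC

lemma digit_tailSum_golden (k : ℕ) : digit (tailSum (2 - φ) X k) = X k := by
  have hr := two_sub_goldenRatio_pos
  have hnext := tailSum_golden_mem_Icc hX (k + 1)
  have hq : (2 - φ) * (φ - 1) = 2 * φ - 3 := by linear_combination -goldenRatio_sq
  rcases hX k with h | h | h <;> rw [h]
  · refine digit_eq_neg_add_one_iff.2 ⟨sub_two_lt_tailSum_golden hX hB k, ?_⟩
    rw [tailSum_golden_eq hX, h]
    nlinarith [hnext.2]
  · refine digit_eq_zero_iff.2 ⟨tailSum_golden_pos hX hCB hC h, ?_⟩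
    rw [tailSum_golden_eq hX, h]
    nlinarith [hnext.2]
  · refine digit_eq_one_iff.2 ?_
    rw [tailSum_golden_eq hX, h]
    nlinarith [sub_two_lt_tailSum_golden hX hB (k + 1)]

lemma iterate_transform_tailSum_golden (n : ℕ) :
    transform^[n] (tailSum (2 - φ) X 0) = tailSum (2 - φ) X n := by
  induction n with
  | zero => rfl
  | succ n ih =>
    rw [iterate_succ_apply', ih, transform, digit_tailSum_golden hX hCB hB hC,
      tailSum_golden_eq hX n]
    linear_combination -(φ - 1) * (X n + tailSum (2 - φ) X (n + 1)) * goldenRatio_sq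

end Expansion

end GoldenLeft

open GoldenLeft

theorem stmt14 (φ : ℝ) (hφ : φ = (1 + Real.sqrt 5) / 2)
    (DL TL : ℝ → ℝ)
    (hDL : ∀ x, DL x =
      if x ≤ -(1 / φ ^ 2) then -φ else if x ≤ 0 then -φ + 1
        else if x ≤ 1 / φ ^ 3 then 0 else 1)
    (hTL : ∀ x, TL x = φ ^ 2 * x - DL x)
    (X : ℕ → ℝ) (hX : ∀ i, X i = -φ + 1 ∨ X i = 0 ∨ X i = 1) :
    (∃ x ∈ Set.Ioc (-(1 / φ ^ 2)) (1 / φ), ∀ k, DL (TL^[k] x) = X k) ↔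
      ((¬ ∃ i, X i = 0 ∧ X (i + 1) = -φ + 1) ∧
        (¬ ∃ i, ∀ j, i ≤ j → X j = -φ + 1) ∧
        (¬ ∃ i, ∀ j, i ≤ j → X j = 0)) := by
  obtain rfl : φ = Real.goldenRatio := hφ
  obtain rfl : DL = digit := funext hDL
  obtain rfl : TL = transform := funext hTL
  rw [Real.neg_one_div_goldenRatio_sq, Real.one_div_goldenRatio]
  constructor
  · rintro ⟨x, hx, hd⟩
    simp only [← hd]
    refine ⟨fun ⟨i, h0, hB⟩ => ?_, not_eventually_digit_eq_neg_add_one hx,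
      not_eventually_digit_eq_zero x⟩
    rw [iterate_succ_apply'] at hB
    exact digit_transform_ne_of_digit_eq_zero h0 hB
  · rintro ⟨hCB, hB, hC⟩
    refine ⟨tailSum (2 - Real.goldenRatio) X 0,
      ⟨sub_two_lt_tailSum_golden hX hB 0, (tailSum_golden_mem_Icc hX 0).2⟩, fun k => ?_⟩
    rw [iterate_transform_tailSum_golden hX hCB hB hC, digit_tailSum_golden hX hCB hB hC]
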